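/- With the projection setup below, V̄_i r_i = V̄_i V̄_i^H r for each i = 1,…,d, and the d+1 vectors ĉ := (∏_{i=1}^d (I − V̄_i V̄_i^H)) c and V̄_1 V̄_1^H r, …, V̄_d V̄_d^H r are mutually orthogonal; in particular ‖r‖₂² = Σ_{i=1}^d ‖r_i‖₂² + ‖ĉ‖₂². -/

import Mathlib

open Matrix

/-- Sizes of the mixed index space in which the `i`-th slot keeps size `n i`
and all other slots are projected to size `m j`. -/
def mixN {d : ℕ} (n m : Fin d → ℕ) (i j : Fin d) : ℕ := if j = i then n j else m j

/-- Kronecker sum `Σⱼ I ⊗ ⋯ ⊗ Bⱼ ⊗ ⋯ ⊗ I`, encoded entrywise on the (dependent)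
product index set. -/
noncomputable def kronSum {d : ℕ} (N : Fin d → ℕ)
    (B : ∀ j, Matrix (Fin (N j)) (Fin (N j)) ℂ) :
    Matrix (∀ j, Fin (N j)) (∀ j, Fin (N j)) ℂ :=
  ∑ j, Matrix.of fun p q =>
    B j (p j) (q j) * ∏ l ∈ Finset.univ.erase j, (if p l = q l then (1 : ℂ) else 0)

/-- The `d`-fold Kronecker product, encoded entrywise. -/
noncomputable def bigKron {d : ℕ} {N M : Fin d → ℕ}
    (V : ∀ j, Matrix (Fin (N j)) (Fin (M j)) ℂ) :
    Matrix (∀ j, Fin (N j)) (∀ j, Fin (M j)) ℂ :=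
  Matrix.of fun p q => ∏ j, V j (p j) (q j)

/-- `V̄ᵢ = V_d ⊗ ⋯ ⊗ V_{i+1} ⊗ I_{nᵢ} ⊗ V_{i-1} ⊗ ⋯ ⊗ V₁`. -/
noncomputable def VbarM {d : ℕ} (n m : Fin d → ℕ)
    (V : ∀ j, Matrix (Fin (n j)) (Fin (m j)) ℂ) (i : Fin d) :
    Matrix (∀ j, Fin (n j)) (∀ j, Fin (mixN n m i j)) ℂ :=
  Matrix.of fun p q => ∏ j,
    if h : j = i then (if p j = Fin.cast (by simp [mixN, h]) (q j) then (1 : ℂ) else 0)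
    else V j (p j) (Fin.cast (by simp [mixN, h]) (q j))

/-- `𝐕ᵢ = I_{m_d} ⊗ ⋯ ⊗ I_{m_{i+1}} ⊗ Vᵢ ⊗ I_{m_{i-1}} ⊗ ⋯ ⊗ I_{m₁}`. -/
noncomputable def ViM {d : ℕ} (n m : Fin d → ℕ)
    (V : ∀ j, Matrix (Fin (n j)) (Fin (m j)) ℂ) (i : Fin d) :
    Matrix (∀ j, Fin (mixN n m i j)) (∀ j, Fin (m j)) ℂ :=
  Matrix.of fun p q => ∏ j,
    if h : j = i then V j (Fin.cast (by simp [mixN, h]) (p j)) (q j)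
    else (if Fin.cast (show mixN n m i j = m j by simp [mixN, h]) (p j) = q j
      then (1 : ℂ) else 0)

/-- `Mᵢ`: the Kronecker sum whose `j`-th term carries `Aⱼ^{(k)} = VⱼᴴAⱼVⱼ` in slot
`j ≠ i` and `Aᵢ` in slot `i`, the identities having size `m_l` (`l ≠ i`) resp. `nᵢ`. -/
noncomputable def MiM {d : ℕ} (n m : Fin d → ℕ)
    (A : ∀ j, Matrix (Fin (n j)) (Fin (n j)) ℂ)
    (V : ∀ j, Matrix (Fin (n j)) (Fin (m j)) ℂ) (i : Fin d) :
    Matrix (∀ j, Fin (mixN n m i j)) (∀ j, Fin (mixN n m i j)) ℂ :=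
  kronSum (mixN n m i) fun j =>
    if h : j = i then
      Matrix.reindex (finCongr (show n j = mixN n m i j by simp [mixN, h]))
        (finCongr (show n j = mixN n m i j by simp [mixN, h])) (A j)
    else
      Matrix.reindex (finCongr (show m j = mixN n m i j by simp [mixN, h]))
        (finCongr (show m j = mixN n m i j by simp [mixN, h])) ((V j)ᴴ * A j * V j)

/-!
The Galerkin condition `𝐀̃ y = 𝐕ᴴ c` says that `r` is orthogonal to the range of `𝐕`, and
`V̄ᵢᴴ 𝐀 V̄ᵢ = Mᵢ`, `V̄ᵢ 𝐕ᵢ = 𝐕` turn `rᵢ` into `V̄ᵢᴴ r`. The `Pᵢ = V̄ᵢ V̄ᵢᴴ` are commuting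
orthogonal projections with `Pᵢ Pⱼ = 𝐕 𝐕ᴴ` for `i ≠ j`, so the `Pᵢ r` are mutually orthogonal
and `r = Σᵢ Pᵢ r + ∏ᵢ (1 - Pᵢ) r`. The `i`-th term of `𝐀 𝐕` lies in the range of `Pᵢ`, hence
`∏ᵢ (1 - Pᵢ) r = ∏ᵢ (1 - Pᵢ) c = ĉ`, and Pythagoras gives the norm identity.
-/

section StarProjection

variable {S ι : Type*} [Ring S] {p : ι → S}

theorem commute_one_sub_list_prod_one_sub (hcomm : Pairwise fun i j => Commute (p i) (p j))
    (a : ι) (L : List ι) : Commute (1 - p a) (L.map fun l => 1 - p l).prod := by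
  refine Commute.list_prod_right _ _ fun x hx => ?_
  obtain ⟨l, -, rfl⟩ := List.mem_map.1 hx
  rcases eq_or_ne a l with rfl | hal
  · exact Commute.refl _
  · exact (Commute.one_right _).sub_right ((Commute.one_left _).sub_left (hcomm hal))

variable [StarRing S]

theorem IsStarProjection.list_prod_one_sub (hp : ∀ i, IsStarProjection (p i))
    (hcomm : Pairwise fun i j => Commute (p i) (p j)) (L : List ι) :
    IsStarProjection (L.map fun l => 1 - p l).prod := by
  induction L with
  | nil => exact IsStarProjection.one S
  | cons a L ih =>
    rw [List.map_cons, List.prod_cons]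
    exact (hp a).one_sub.mul ih (commute_one_sub_list_prod_one_sub hcomm a L)

theorem list_prod_one_sub_mul_eq_zero (hp : ∀ i, IsStarProjection (p i))
    (hcomm : Pairwise fun i j => Commute (p i) (p j)) {L : List ι} {i : ι} (hi : i ∈ L) :
    (L.map fun l => 1 - p l).prod * p i = 0 := by
  induction L with
  | nil => simp at hi
  | cons a L ih =>
    rw [List.map_cons, List.prod_cons]
    rcases List.mem_cons.1 hi with rfl | hi
    · rw [(commute_one_sub_list_prod_one_sub hcomm i L).eq, mul_assoc,
        (hp i).one_sub_mul_self, mul_zero]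
    · rw [mul_assoc, ih hi, mul_zero]

end StarProjection

section OrthogonalDecomposition

variable {R n : Type*} [CommRing R] [Fintype n]

theorem list_prod_one_sub_mulVec [DecidableEq n] {ι : Type*} {P : ι → Matrix n n R} {r : n → R}
    (hr : Pairwise fun i j => P i *ᵥ (P j *ᵥ r) = 0) {L : List ι} (hL : L.Nodup) :
    (L.map fun l => 1 - P l).prod *ᵥ r = r - (L.map fun l => P l *ᵥ r).sum := by
  induction L with
  | nil => simp
  | cons a L ih =>
    obtain ⟨haL, hL⟩ := List.nodup_cons.1 hL
    have hkill : P a *ᵥ (L.map fun l => P l *ᵥ r).sum = 0 := by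
      rw [← mulVecLin_apply, map_list_sum, List.map_map]
      exact List.sum_eq_zero fun x hx => by
        obtain ⟨l, hl, rfl⟩ := List.mem_map.1 hx
        exact hr fun hal => haL (hal ▸ hl)
    rw [List.map_cons, List.prod_cons, ← mulVec_mulVec, ih hL, List.map_cons, List.sum_cons,
      sub_mulVec, one_mulVec, mulVec_sub, hkill]
    abel

variable [StarRing R]

theorem star_mulVec_dotProduct_mulVec {m l : Type*} [Fintype m] [Fintype l]
    (M : Matrix n m R) (N : Matrix n l R) (u : m → R) (v : l → R) :
    star (M *ᵥ u) ⬝ᵥ (N *ᵥ v) = star u ⬝ᵥ (Mᴴ * N) *ᵥ v := by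
  rw [star_mulVec, ← dotProduct_mulVec, mulVec_mulVec]

theorem IsSelfAdjoint.star_mulVec_dotProduct {M : Matrix n n R} (hM : IsSelfAdjoint M)
    (u v : n → R) : star (M *ᵥ u) ⬝ᵥ v = star u ⬝ᵥ (M *ᵥ v) := by
  rw [star_mulVec, ← dotProduct_mulVec, ← star_eq_conjTranspose, hM.star_eq]

theorem isStarProjection_mul_conjTranspose_self {m : Type*} [Fintype m] [DecidableEq m]
    {X : Matrix n m R} (hX : Xᴴ * X = 1) : IsStarProjection (X * Xᴴ) where
  isIdempotentElem := by
    rw [IsIdempotentElem, Matrix.mul_assoc, ← Matrix.mul_assoc Xᴴ, hX, Matrix.one_mul]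
  isSelfAdjoint := isHermitian_mul_conjTranspose_self X

theorem star_sum_add_dotProduct_sum_add {ι : Type*} [Fintype ι] (u : ι → n → R) (w : n → R)
    (hu : Pairwise fun i j => star (u i) ⬝ᵥ u j = 0) (hw : ∀ i, star w ⬝ᵥ u i = 0) :
    star (∑ i, u i + w) ⬝ᵥ (∑ i, u i + w) = ∑ i, star (u i) ⬝ᵥ u i + star w ⬝ᵥ w := by
  have hw' : ∀ i, star (u i) ⬝ᵥ w = 0 := fun i => by rw [star_dotProduct, hw, star_zero]
  simp only [star_add, star_sum, add_dotProduct, dotProduct_add, sum_dotProduct, dotProduct_sum,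
    hw, hw', Finset.sum_const_zero, add_zero, zero_add]
  congr 1
  exact Finset.sum_congr rfl fun j _ =>
    Finset.sum_eq_single j (fun i _ hij => hu hij) (absurd (Finset.mem_univ j))

theorem star_list_prod_one_sub_mulVec_dotProduct_mulVec [DecidableEq n] {ι : Type*}
    {P : ι → Matrix n n R} (hP : ∀ i, IsStarProjection (P i))
    (hcomm : Pairwise fun i j => Commute (P i) (P j)) {L : List ι} {i : ι} (hi : i ∈ L)
    (u v : n → R) : star ((L.map fun l => 1 - P l).prod *ᵥ u) ⬝ᵥ (P i *ᵥ v) = 0 := by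
  rw [(IsStarProjection.list_prod_one_sub hP hcomm L).isSelfAdjoint.star_mulVec_dotProduct,
    mulVec_mulVec, list_prod_one_sub_mul_eq_zero hP hcomm hi, zero_mulVec, dotProduct_zero]

theorem star_dotProduct_self_eq_sum_add_list_prod [DecidableEq n] {d : ℕ}
    {P : Fin d → Matrix n n R} (hP : ∀ i, IsStarProjection (P i))
    (hcomm : Pairwise fun i j => Commute (P i) (P j)) {r : n → R}
    (hr : Pairwise fun i j => P i *ᵥ (P j *ᵥ r) = 0) :
    star r ⬝ᵥ r = ∑ i, star (P i *ᵥ r) ⬝ᵥ (P i *ᵥ r)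
      + star (((List.finRange d).map fun l => 1 - P l).prod *ᵥ r)
        ⬝ᵥ (((List.finRange d).map fun l => 1 - P l).prod *ᵥ r) := by
  have hr_eq : r = ∑ i, P i *ᵥ r + ((List.finRange d).map fun l => 1 - P l).prod *ᵥ r := by
    rw [list_prod_one_sub_mulVec hr (List.nodup_finRange d), Fin.sum_univ_def, add_sub_cancel]
  conv_lhs => rw [hr_eq]
  refine star_sum_add_dotProduct_sum_add _ _ (fun i j hij => ?_) fun i =>
    star_list_prod_one_sub_mulVec_dotProduct_mulVec hP hcomm (List.mem_finRange i) r r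
  dsimp only
  rw [(hP i).isSelfAdjoint.star_mulVec_dotProduct, hr hij, dotProduct_zero]

end OrthogonalDecomposition

section Kronecker

variable {d : ℕ}

theorem conjTranspose_bigKron {N M : Fin d → ℕ} (U : ∀ j, Matrix (Fin (N j)) (Fin (M j)) ℂ) :
    (bigKron U)ᴴ = bigKron fun j => (U j)ᴴ := by
  ext p q
  simp [bigKron, conjTranspose_apply]

theorem bigKron_mul_bigKron {N M K : Fin d → ℕ} (U : ∀ j, Matrix (Fin (N j)) (Fin (M j)) ℂ)
    (W : ∀ j, Matrix (Fin (M j)) (Fin (K j)) ℂ) :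
    bigKron U * bigKron W = bigKron fun j => U j * W j := by
  ext p q
  simp only [mul_apply, bigKron, of_apply, ← Finset.prod_mul_distrib]
  exact (Fintype.prod_sum fun j (x : Fin (M j)) => U j (p j) x * W j x (q j)).symm

theorem bigKron_one {N : Fin d → ℕ} :
    bigKron (fun j => (1 : Matrix (Fin (N j)) (Fin (N j)) ℂ)) = 1 := by
  ext p q
  simp only [bigKron, of_apply, one_apply]
  by_cases h : p = q
  · subst h; simp
  · obtain ⟨j, hj⟩ := Function.ne_iff.mp h
    rw [if_neg h]
    exact Finset.prod_eq_zero (Finset.mem_univ j) (if_neg hj)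

theorem kronSum_eq_sum_bigKron {N : Fin d → ℕ} (B : ∀ j, Matrix (Fin (N j)) (Fin (N j)) ℂ) :
    kronSum N B = ∑ j, bigKron fun l => if l = j then B l else 1 := by
  refine Finset.sum_congr rfl fun j _ => ?_
  ext p q
  rw [of_apply, bigKron, of_apply, ← Finset.mul_prod_erase _ _ (Finset.mem_univ j), if_pos rfl]
  congr 1
  exact Finset.prod_congr rfl fun l hl => by rw [if_neg (Finset.ne_of_mem_erase hl), one_apply]

variable {N M : Fin d → ℕ} {U : ∀ j, Matrix (Fin (N j)) (Fin (M j)) ℂ}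

theorem conjTranspose_bigKron_mul_bigKron (hU : ∀ j, (U j)ᴴ * U j = 1) :
    (bigKron U)ᴴ * bigKron U = 1 := by
  rw [conjTranspose_bigKron, bigKron_mul_bigKron, funext hU, bigKron_one]

theorem conjTranspose_bigKron_mul_kronSum_mul_bigKron (hU : ∀ j, (U j)ᴴ * U j = 1)
    (A : ∀ j, Matrix (Fin (N j)) (Fin (N j)) ℂ) :
    (bigKron U)ᴴ * kronSum N A * bigKron U = kronSum M fun j => (U j)ᴴ * A j * U j := by
  rw [conjTranspose_bigKron, kronSum_eq_sum_bigKron, kronSum_eq_sum_bigKron, Matrix.mul_sum,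
    Matrix.sum_mul]
  refine Finset.sum_congr rfl fun j _ => ?_
  rw [bigKron_mul_bigKron, bigKron_mul_bigKron]
  congr 1
  funext l
  split_ifs
  · rfl
  · rw [Matrix.mul_one, hU]

end Kronecker

section Slots

variable {d : ℕ} (n m : Fin d → ℕ) (V : ∀ j, Matrix (Fin (n j)) (Fin (m j)) ℂ) (i : Fin d)

noncomputable def vbarFactor (j : Fin d) : Matrix (Fin (n j)) (Fin (mixN n m i j)) ℂ :=
  if h : j = i then
    (1 : Matrix (Fin (n j)) (Fin (n j)) ℂ).submatrix id (finCongr (by simp [mixN, h]))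
  else (V j).submatrix id (finCongr (by simp [mixN, h]))

noncomputable def viFactor (j : Fin d) : Matrix (Fin (mixN n m i j)) (Fin (m j)) ℂ :=
  if h : j = i then (V j).submatrix (finCongr (by simp [mixN, h])) id
  else (1 : Matrix (Fin (m j)) (Fin (m j)) ℂ).submatrix (finCongr (by simp [mixN, h])) id

theorem VbarM_eq_bigKron : VbarM n m V i = bigKron (vbarFactor n m V i) := by
  ext p q
  simp only [VbarM, bigKron, of_apply]
  refine Finset.prod_congr rfl fun j _ => ?_
  by_cases h : j = i
  · simp [vbarFactor, h, one_apply]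
  · simp [vbarFactor, h]

theorem ViM_eq_bigKron : ViM n m V i = bigKron (viFactor n m V i) := by
  ext p q
  simp only [ViM, bigKron, of_apply]
  refine Finset.prod_congr rfl fun j _ => ?_
  by_cases h : j = i
  · simp [viFactor, h]
  · simp [viFactor, h, one_apply]

theorem vbarFactor_mul_viFactor (j : Fin d) : vbarFactor n m V i j * viFactor n m V i j = V j := by
  unfold vbarFactor viFactor
  split_ifs <;> simp [submatrix_mul_equiv]

theorem vbarFactor_mul_conjTranspose (j : Fin d) :
    vbarFactor n m V i j * (vbarFactor n m V i j)ᴴ = if j = i then 1 else V j * (V j)ᴴ := by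
  unfold vbarFactor
  split_ifs <;> simp [conjTranspose_submatrix, submatrix_mul_equiv]

theorem conjTranspose_vbarFactor_mul_self (hV : ∀ j, (V j)ᴴ * V j = 1) (j : Fin d) :
    (vbarFactor n m V i j)ᴴ * vbarFactor n m V i j = 1 := by
  unfold vbarFactor
  split_ifs <;>
  · rw [conjTranspose_submatrix, ← submatrix_mul _ _ _ _ _ Function.bijective_id]
    simp [hV]

end Slots

section Global

variable {d : ℕ} (n m : Fin d → ℕ) (A : ∀ j, Matrix (Fin (n j)) (Fin (n j)) ℂ)
  (V : ∀ j, Matrix (Fin (n j)) (Fin (m j)) ℂ) (i : Fin d)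

theorem conjTranspose_VbarM_mul_kronSum_mul_VbarM (hV : ∀ j, (V j)ᴴ * V j = 1) :
    (VbarM n m V i)ᴴ * kronSum n A * VbarM n m V i = MiM n m A V i := by
  rw [VbarM_eq_bigKron, conjTranspose_bigKron_mul_kronSum_mul_bigKron
    (conjTranspose_vbarFactor_mul_self n m V i hV)]
  congr 1
  funext j
  unfold vbarFactor
  split_ifs <;>
  · ext a b
    simp [mul_apply, Finset.sum_mul, mul_assoc, one_apply]

theorem VbarM_mul_ViM : VbarM n m V i * ViM n m V i = bigKron V := by
  rw [VbarM_eq_bigKron, ViM_eq_bigKron, bigKron_mul_bigKron]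
  exact congrArg bigKron (funext (vbarFactor_mul_viFactor n m V i))

theorem VbarM_mul_conjTranspose :
    VbarM n m V i * (VbarM n m V i)ᴴ = bigKron fun l => if l = i then 1 else V l * (V l)ᴴ := by
  rw [VbarM_eq_bigKron, conjTranspose_bigKron, bigKron_mul_bigKron]
  exact congrArg bigKron (funext (vbarFactor_mul_conjTranspose n m V i))

end Global

section Projections

variable {d : ℕ} (n m : Fin d → ℕ) (A : ∀ j, Matrix (Fin (n j)) (Fin (n j)) ℂ)
  {V : ∀ j, Matrix (Fin (n j)) (Fin (m j)) ℂ} (hV : ∀ j, (V j)ᴴ * V j = 1)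
include hV

theorem isStarProjection_VbarM_mul_conjTranspose (i : Fin d) :
    IsStarProjection (VbarM n m V i * (VbarM n m V i)ᴴ) := by
  refine isStarProjection_mul_conjTranspose_self ?_
  rw [VbarM_eq_bigKron]
  exact conjTranspose_bigKron_mul_bigKron (conjTranspose_vbarFactor_mul_self n m V i hV)

theorem VbarM_mul_conjTranspose_mul_of_ne {i j : Fin d} (hij : i ≠ j) :
    VbarM n m V i * (VbarM n m V i)ᴴ * (VbarM n m V j * (VbarM n m V j)ᴴ)
      = bigKron V * (bigKron V)ᴴ := by
  rw [VbarM_mul_conjTranspose, VbarM_mul_conjTranspose, bigKron_mul_bigKron,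
    conjTranspose_bigKron, bigKron_mul_bigKron]
  congr 1
  funext l
  by_cases hi : l = i
  · subst hi
    rw [if_pos rfl, if_neg hij, Matrix.one_mul]
  · by_cases hj : l = j
    · rw [if_neg hi, if_pos hj, Matrix.mul_one]
    · rw [if_neg hi, if_neg hj, Matrix.mul_assoc, ← Matrix.mul_assoc (V l)ᴴ, hV l, Matrix.one_mul]

theorem commute_VbarM_mul_conjTranspose :
    Pairwise fun i j =>
      Commute (VbarM n m V i * (VbarM n m V i)ᴴ) (VbarM n m V j * (VbarM n m V j)ᴴ) :=
  fun _ _ hij => (VbarM_mul_conjTranspose_mul_of_ne n m hV hij).trans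
    (VbarM_mul_conjTranspose_mul_of_ne n m hV hij.symm).symm

theorem VbarM_mul_conjTranspose_mul_bigKron_slot (i : Fin d) :
    VbarM n m V i * (VbarM n m V i)ᴴ * bigKron (fun l => (if l = i then A l else 1) * V l)
      = bigKron fun l => (if l = i then A l else 1) * V l := by
  rw [VbarM_mul_conjTranspose, bigKron_mul_bigKron]
  congr 1
  funext l
  split_ifs
  · rw [Matrix.one_mul]
  · rw [Matrix.one_mul, Matrix.mul_assoc, hV, Matrix.mul_one]

theorem list_prod_one_sub_VbarM_mul_conjTranspose_mul_kronSum_mul_bigKron :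
    ((List.finRange d).map fun l => 1 - VbarM n m V l * (VbarM n m V l)ᴴ).prod
      * (kronSum n A * bigKron V) = 0 := by
  rw [kronSum_eq_sum_bigKron, Matrix.sum_mul, Matrix.mul_sum]
  refine Finset.sum_eq_zero fun i _ => ?_
  rw [bigKron_mul_bigKron, ← VbarM_mul_conjTranspose_mul_bigKron_slot n m A hV i,
    ← Matrix.mul_assoc,
    list_prod_one_sub_mul_eq_zero (isStarProjection_VbarM_mul_conjTranspose n m hV)
      (commute_VbarM_mul_conjTranspose n m hV) (List.mem_finRange i), Matrix.zero_mul]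

theorem conjTranspose_bigKron_mulVec_residual {c : (∀ j, Fin (n j)) → ℂ} {y : (∀ j, Fin (m j)) → ℂ}
    (hy : (kronSum m fun i => (V i)ᴴ * A i * V i) *ᵥ y = (bigKron V)ᴴ *ᵥ c) :
    (bigKron V)ᴴ *ᵥ (c - kronSum n A *ᵥ (bigKron V *ᵥ y)) = 0 := by
  rw [mulVec_sub, mulVec_mulVec, mulVec_mulVec, conjTranspose_bigKron_mul_kronSum_mul_bigKron hV,
    hy, sub_self]

theorem conjTranspose_VbarM_mulVec_residual (i : Fin d) (c : (∀ j, Fin (n j)) → ℂ)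
    (y : (∀ j, Fin (m j)) → ℂ) :
    (VbarM n m V i)ᴴ *ᵥ c - MiM n m A V i *ᵥ (ViM n m V i *ᵥ y)
      = (VbarM n m V i)ᴴ *ᵥ (c - kronSum n A *ᵥ (bigKron V *ᵥ y)) := by
  rw [← conjTranspose_VbarM_mul_kronSum_mul_VbarM n m A V i hV, ← VbarM_mul_ViM n m V i]
  simp only [mulVec_sub, mulVec_mulVec, Matrix.mul_assoc]

end Projections

theorem stmt_3_general {d : ℕ} (n m : Fin d → ℕ)
    (A : ∀ i, Matrix (Fin (n i)) (Fin (n i)) ℂ)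
    (V : ∀ i, Matrix (Fin (n i)) (Fin (m i)) ℂ)
    (hV : ∀ i, (V i)ᴴ * V i = 1)
    (c : (∀ j, Fin (n j)) → ℂ)
    (y : (∀ j, Fin (m j)) → ℂ)
    (hy : (kronSum m fun i => (V i)ᴴ * A i * V i) *ᵥ y = (bigKron V)ᴴ *ᵥ c) :
    (∀ i, VbarM n m V i *ᵥ
        ((VbarM n m V i)ᴴ *ᵥ c - MiM n m A V i *ᵥ (ViM n m V i *ᵥ y))
      = VbarM n m V i *ᵥ ((VbarM n m V i)ᴴ *ᵥ
          (c - kronSum n A *ᵥ (bigKron V *ᵥ y))))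
    ∧ (∀ i, star (((List.finRange d).map
          fun l => 1 - VbarM n m V l * (VbarM n m V l)ᴴ).prod *ᵥ c)
        ⬝ᵥ (VbarM n m V i *ᵥ ((VbarM n m V i)ᴴ *ᵥ
          (c - kronSum n A *ᵥ (bigKron V *ᵥ y)))) = 0)
    ∧ (∀ i j, i ≠ j →
        star (VbarM n m V i *ᵥ ((VbarM n m V i)ᴴ *ᵥ
            (c - kronSum n A *ᵥ (bigKron V *ᵥ y))))
          ⬝ᵥ (VbarM n m V j *ᵥ ((VbarM n m V j)ᴴ *ᵥ
            (c - kronSum n A *ᵥ (bigKron V *ᵥ y)))) = 0)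
    ∧ star (c - kronSum n A *ᵥ (bigKron V *ᵥ y))
          ⬝ᵥ (c - kronSum n A *ᵥ (bigKron V *ᵥ y))
      = (∑ i, star ((VbarM n m V i)ᴴ *ᵥ c
            - MiM n m A V i *ᵥ (ViM n m V i *ᵥ y))
          ⬝ᵥ ((VbarM n m V i)ᴴ *ᵥ c - MiM n m A V i *ᵥ (ViM n m V i *ᵥ y)))
        + star (((List.finRange d).map
            fun l => 1 - VbarM n m V l * (VbarM n m V l)ᴴ).prod *ᵥ c)
          ⬝ᵥ (((List.finRange d).map
            fun l => 1 - VbarM n m V l * (VbarM n m V l)ᴴ).prod *ᵥ c) := by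
  set r := c - kronSum n A *ᵥ (bigKron V *ᵥ y) with hr
  have hP := isStarProjection_VbarM_mul_conjTranspose n m hV
  have hcomm := commute_VbarM_mul_conjTranspose n m hV
  have hri : ∀ i, (VbarM n m V i)ᴴ *ᵥ c - MiM n m A V i *ᵥ (ViM n m V i *ᵥ y)
      = (VbarM n m V i)ᴴ *ᵥ r := fun i => conjTranspose_VbarM_mulVec_residual n m A hV i c y
  have hPr : Pairwise fun i j => (VbarM n m V i * (VbarM n m V i)ᴴ) *ᵥ
      ((VbarM n m V j * (VbarM n m V j)ᴴ) *ᵥ r) = 0 := fun i j hij => by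
    dsimp only
    rw [mulVec_mulVec, VbarM_mul_conjTranspose_mul_of_ne n m hV hij, ← mulVec_mulVec,
      conjTranspose_bigKron_mulVec_residual n m A hV hy, mulVec_zero]
  have hQr : ((List.finRange d).map fun l => 1 - VbarM n m V l * (VbarM n m V l)ᴴ).prod *ᵥ r
      = ((List.finRange d).map fun l => 1 - VbarM n m V l * (VbarM n m V l)ᴴ).prod *ᵥ c := by
    rw [hr, mulVec_sub, mulVec_mulVec, mulVec_mulVec, Matrix.mul_assoc,
      list_prod_one_sub_VbarM_mul_conjTranspose_mul_kronSum_mul_bigKron n m A hV, zero_mulVec,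
      sub_zero]
  refine ⟨fun i => by rw [hri], fun i => ?_, fun i j hij => ?_, ?_⟩
  · rw [mulVec_mulVec]
    exact star_list_prod_one_sub_mulVec_dotProduct_mulVec hP hcomm (List.mem_finRange i) c r
  · rw [mulVec_mulVec, mulVec_mulVec, (hP i).isSelfAdjoint.star_mulVec_dotProduct, hPr hij,
      dotProduct_zero]
  · rw [star_dotProduct_self_eq_sum_add_list_prod hP hcomm hPr, hQr]
    congr 1
    refine Finset.sum_congr rfl fun i _ => ?_
    rw [hri, (hP i).isSelfAdjoint.star_mulVec_dotProduct, mulVec_mulVec, (hP i).isIdempotentElem.eq,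
      star_mulVec_dotProduct_mulVec, conjTranspose_conjTranspose]

/-- `V̄ᵢ rᵢ = V̄ᵢ V̄ᵢᴴ r` for each `i`; the vectors `ĉ` and
`V̄ᵢV̄ᵢᴴ r`, `i = 1,…,d`, are mutually orthogonal; and
`‖r‖₂² = Σᵢ ‖rᵢ‖₂² + ‖ĉ‖₂²` (squared norms written as `star x ⬝ᵥ x`). -/
theorem stmt_3 {d : ℕ} (n m : Fin d → ℕ)
    (A : ∀ i, Matrix (Fin (n i)) (Fin (n i)) ℂ)
    (V : ∀ i, Matrix (Fin (n i)) (Fin (m i)) ℂ)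
    (hV : ∀ i, (V i)ᴴ * V i = 1)
    (c : (∀ j, Fin (n j)) → ℂ)
    (hAt : IsUnit (kronSum m fun i => (V i)ᴴ * A i * V i))
    (y : (∀ j, Fin (m j)) → ℂ)
    (hy : (kronSum m fun i => (V i)ᴴ * A i * V i) *ᵥ y = (bigKron V)ᴴ *ᵥ c) :
    (∀ i, VbarM n m V i *ᵥ
        ((VbarM n m V i)ᴴ *ᵥ c - MiM n m A V i *ᵥ (ViM n m V i *ᵥ y))
      = VbarM n m V i *ᵥ ((VbarM n m V i)ᴴ *ᵥ
          (c - kronSum n A *ᵥ (bigKron V *ᵥ y))))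
    ∧ (∀ i, star (((List.finRange d).map
          fun l => 1 - VbarM n m V l * (VbarM n m V l)ᴴ).prod *ᵥ c)
        ⬝ᵥ (VbarM n m V i *ᵥ ((VbarM n m V i)ᴴ *ᵥ
          (c - kronSum n A *ᵥ (bigKron V *ᵥ y)))) = 0)
    ∧ (∀ i j, i ≠ j →
        star (VbarM n m V i *ᵥ ((VbarM n m V i)ᴴ *ᵥ
            (c - kronSum n A *ᵥ (bigKron V *ᵥ y))))
          ⬝ᵥ (VbarM n m V j *ᵥ ((VbarM n m V j)ᴴ *ᵥ
            (c - kronSum n A *ᵥ (bigKron V *ᵥ y)))) = 0)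
    ∧ star (c - kronSum n A *ᵥ (bigKron V *ᵥ y))
          ⬝ᵥ (c - kronSum n A *ᵥ (bigKron V *ᵥ y))
      = (∑ i, star ((VbarM n m V i)ᴴ *ᵥ c
            - MiM n m A V i *ᵥ (ViM n m V i *ᵥ y))
          ⬝ᵥ ((VbarM n m V i)ᴴ *ᵥ c - MiM n m A V i *ᵥ (ViM n m V i *ᵥ y)))
        + star (((List.finRange d).map
            fun l => 1 - VbarM n m V l * (VbarM n m V l)ᴴ).prod *ᵥ c)
          ⬝ᵥ (((List.finRange d).map
            fun l => 1 - VbarM n m V l * (VbarM n m V l)ᴴ).prod *ᵥ c) :=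
  stmt_3_general n m A V hV c y hy
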